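/- Let K be a field and A a 2×2 matrix over K with entries a, b, c, d (so b is the (1,2) entry), and assume b ≠ 0. Write b_{k+1} for the (1,2) entry of the matrix power A^{k+1}. Then for every integer k ≥ 0, b_{k+1}/b = tr(Sym^k A). -/

import Mathlib

/-!
Let `V m` be the binary forms of degree `m`, on which `A` acts by substitution. The Koszul
sequence `0 → V k → V (k+1) × V (k+1) → V (k+2) → 0`, `r ↦ (-(y r), x r)`, `(p, q) ↦ x p + y q`,
is equivariant for `det A • Sym^k A`, `A ⊗ Sym^(k+1) A` and `Sym^(k+2) A`, and it splits
(divide by monomials), so traces add: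
`tr Sym^(k+2) A = tr A * tr Sym^(k+1) A - det A * tr Sym^k A`.
By Cayley–Hamilton the `(0,1)` entries of `A ^ (k+1)` satisfy the same recurrence, and the two
sequences agree for `k = 0, 1`.
-/

open MvPolynomial Finset

/-- The endomorphism induced by the matrix `A` on the space of homogeneous polynomials of
degree `k` in `n` variables (a model for the `k`-th symmetric power of `K^n`). -/
noncomputable def symPowMap {K : Type*} [Field K] {n : ℕ} (A : Matrix (Fin n) (Fin n) K) (k : ℕ) :
    homogeneousSubmodule (Fin n) K k →ₗ[K] homogeneousSubmodule (Fin n) K k :=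
  LinearMap.restrict
    (MvPolynomial.aeval fun i => ∑ j, A i j • X j :
      MvPolynomial (Fin n) K →ₐ[K] MvPolynomial (Fin n) K).toLinearMap
    (fun p hp => by
      rw [mem_homogeneousSubmodule] at hp ⊢
      have hg : ∀ i : Fin n, (∑ j, A i j • X j : MvPolynomial (Fin n) K).IsHomogeneous 1 := by
        intro i
        apply IsHomogeneous.sum
        intro j _
        rw [smul_eq_C_mul]
        exact (isHomogeneous_X K j).C_mul (A i j)
      have := hp.aeval (fun i => ∑ j, A i j • X j) hg
      simpa using this)

/-- `trSymPow A k = tr(Sym^k A)`, the trace of the `k`-th symmetric power of `A`. -/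
noncomputable def trSymPow {K : Type*} [Field K] {n : ℕ} (A : Matrix (Fin n) (Fin n) K)
    (k : ℕ) : K :=
  LinearMap.trace K _ (symPowMap A k)

/-- `tr(Sym^k A)` for an integer index, with the convention `tr(Sym^k A) = 0` for `k < 0`. -/
noncomputable def trSymPowZ {K : Type*} [Field K] {n : ℕ} (A : Matrix (Fin n) (Fin n) K)
    (k : ℤ) : K :=
  if 0 ≤ k then trSymPow A k.toNat else 0

namespace LinearMap

variable {R U V W : Type*} [CommRing R]
  [AddCommGroup U] [Module R U] [Module.Free R U] [Module.Finite R U]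
  [AddCommGroup V] [Module R V] [Module.Free R V] [Module.Finite R V]
  [AddCommGroup W] [Module R W] [Module.Free R W] [Module.Finite R W]

theorem trace_eq_trace_add_trace_of_split (φ : W →ₗ[R] V) (σ : V →ₗ[R] W) (ι : U →ₗ[R] W)
    (ρ : W →ₗ[R] U) (T : W →ₗ[R] W) (S : V →ₗ[R] V) (hφσ : φ ∘ₗ σ = id)
    (hsplit : σ ∘ₗ φ + ι ∘ₗ ρ = id) (hT : φ ∘ₗ T = S ∘ₗ φ) :
    trace R W T = trace R V S + trace R U (ρ ∘ₗ T ∘ₗ ι) := by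
  have hS : trace R W (T ∘ₗ σ ∘ₗ φ) = trace R V S := by
    rw [← comp_assoc, trace_comp_comm', ← comp_assoc, hT, comp_assoc, hφσ, comp_id]
  conv_lhs => rw [← comp_id T, ← hsplit, comp_add, map_add, hS, ← comp_assoc, trace_comp_comm']

end LinearMap

namespace MvPolynomial

variable {σ R : Type*} [CommRing R]

/-- Division by `X i`, discarding the monomials not divisible by `X i`. -/
noncomputable def divX (i : σ) : MvPolynomial σ R →ₗ[R] MvPolynomial σ R where
  toFun p := p.divMonomial (Finsupp.single i 1)
  map_add' p q := add_divMonomial p q _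
  map_smul' c p := by ext; simp

theorem coeff_divX (i : σ) (d : σ →₀ ℕ) (p : MvPolynomial σ R) :
    coeff d (divX i p) = coeff (Finsupp.single i 1 + d) p := rfl

@[simp]
theorem divX_X_mul (i : σ) (p : MvPolynomial σ R) : divX i (X i * p) = p :=
  X_mul_divMonomial i p

theorem divX_X_mul_of_ne {i j : σ} (h : j ≠ i) (p : MvPolynomial σ R) :
    divX i (X j * p) = X j * divX i p := by
  classical
  ext d
  have hj : (Finsupp.single i 1 + d : σ →₀ ℕ) j = d j := by simp [h.symm]
  simp only [coeff_divX, coeff_X_mul', Finsupp.mem_support_iff, hj]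
  split_ifs with hd
  · rw [add_tsub_assoc_of_le (Finsupp.single_le_iff.2 (Nat.one_le_iff_ne_zero.2 hd))]
  · rfl

theorem IsHomogeneous.divX {p : MvPolynomial σ R} {k : ℕ} (hp : p.IsHomogeneous (k + 1))
    (i : σ) : (divX i p).IsHomogeneous k := by
  intro d hd
  have := hp hd
  rw [map_add, Finsupp.weight_single] at this
  simp at this
  omega

theorem divX_eq_zero_of_isHomogeneous_zero {p : MvPolynomial σ R} (hp : p.IsHomogeneous 0)
    (i : σ) : divX i p = 0 := by
  ext d
  by_contra hd
  have := hp hd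
  rw [map_add, Finsupp.weight_single] at this
  simp at this

theorem X_zero_mul_divX_add_X_one_mul_divX {s : MvPolynomial (Fin 2) R} {m : ℕ}
    (hs : s.IsHomogeneous (m + 1)) :
    X 0 * divX 0 s + X 1 * divX 1 (s - X 0 * divX 0 s) = s := by
  have hmod : s - X 0 * divX 0 s = s.modMonomial (Finsupp.single 0 1) :=
    sub_eq_of_eq_add' (divMonomial_add_modMonomial_single s 0).symm
  -- no monomial of `s - X 0 * divX 0 s` contains `X 0`, and none is constant
  obtain ⟨q, hq⟩ : X 1 ∣ s - X 0 * divX 0 s := by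
    rw [hmod, X_dvd_iff_modMonomial_eq_zero]
    ext d
    by_cases h1 : Finsupp.single 1 1 ≤ d
    · rw [coeff_modMonomial_of_le _ h1, coeff_zero]
    by_cases h0 : Finsupp.single 0 1 ≤ d
    · rw [coeff_modMonomial_of_not_le _ h1, coeff_modMonomial_of_le _ h0, coeff_zero]
    have hd : d = 0 := by
      ext x
      fin_cases x <;> simp_all [Finsupp.single_le_iff]
    rw [coeff_modMonomial_of_not_le _ h1, coeff_modMonomial_of_not_le _ h0, hd, coeff_zero,
      hs.coeff_eq_zero (by simp)]
  rw [hq, divX_X_mul, ← hq, add_sub_cancel]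

instance [Finite σ] (n : ℕ) : Module.Finite R (homogeneousSubmodule σ R n) :=
  Module.Finite.iff_fg.mpr (homogeneousSubmodule_fg σ R n)

noncomputable def mulXHom (i : Fin 2) (k : ℕ) :
    homogeneousSubmodule (Fin 2) R k →ₗ[R] homogeneousSubmodule (Fin 2) R (k + 1) :=
  (LinearMap.mulLeft R (X i)).restrict fun p hp => by
    simpa [add_comm] using (isHomogeneous_X R i).mul hp

noncomputable def divXHom (i : Fin 2) (k : ℕ) :
    homogeneousSubmodule (Fin 2) R (k + 1) →ₗ[R] homogeneousSubmodule (Fin 2) R k :=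
  (divX i).restrict fun _ hp => IsHomogeneous.divX hp i

@[simp]
theorem coe_mulXHom (i : Fin 2) (k : ℕ) (p : homogeneousSubmodule (Fin 2) R k) :
    (mulXHom i k p : MvPolynomial (Fin 2) R) = X i * (p : MvPolynomial (Fin 2) R) := rfl

@[simp]
theorem coe_divXHom (i : Fin 2) (k : ℕ) (p : homogeneousSubmodule (Fin 2) R (k + 1)) :
    (divXHom i k p : MvPolynomial (Fin 2) R) = divX i (p : MvPolynomial (Fin 2) R) := rfl

noncomputable def koszulMap (m : ℕ) :
    homogeneousSubmodule (Fin 2) R m × homogeneousSubmodule (Fin 2) R m →ₗ[R]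
      homogeneousSubmodule (Fin 2) R (m + 1) :=
  (mulXHom 0 m).coprod (mulXHom 1 m)

noncomputable def koszulIncl (k : ℕ) :
    homogeneousSubmodule (Fin 2) R k →ₗ[R]
      homogeneousSubmodule (Fin 2) R (k + 1) × homogeneousSubmodule (Fin 2) R (k + 1) :=
  (-mulXHom 1 k).prod (mulXHom 0 k)

noncomputable def koszulSection (m : ℕ) :
    homogeneousSubmodule (Fin 2) R (m + 1) →ₗ[R]
      homogeneousSubmodule (Fin 2) R m × homogeneousSubmodule (Fin 2) R m :=
  (divXHom 0 m).prod (divXHom 1 m ∘ₗ (LinearMap.id - mulXHom 0 m ∘ₗ divXHom 0 m))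

noncomputable def koszulRetract (k : ℕ) :
    homogeneousSubmodule (Fin 2) R (k + 1) × homogeneousSubmodule (Fin 2) R (k + 1) →ₗ[R]
      homogeneousSubmodule (Fin 2) R k :=
  divXHom 0 k ∘ₗ LinearMap.snd R _ _

theorem koszulMap_comp_koszulSection (m : ℕ) :
    koszulMap (R := R) m ∘ₗ koszulSection m = LinearMap.id := by
  ext1 s
  apply Subtype.ext
  simpa [koszulMap, koszulSection, mul_sub] using X_zero_mul_divX_add_X_one_mul_divX s.2

theorem koszulSection_koszulMap_apply (m : ℕ) (p q : homogeneousSubmodule (Fin 2) R m) :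
    ((koszulSection m (koszulMap m (p, q))).1 : MvPolynomial (Fin 2) R) =
        (p : MvPolynomial (Fin 2) R) + X 1 * divX 0 (q : MvPolynomial (Fin 2) R) ∧
      ((koszulSection m (koszulMap m (p, q))).2 : MvPolynomial (Fin 2) R) =
        (q : MvPolynomial (Fin 2) R) - X 0 * divX 0 (q : MvPolynomial (Fin 2) R) := by
  set P := (p : MvPolynomial (Fin 2) R)
  set Q := (q : MvPolynomial (Fin 2) R)
  have h0 : divX 0 (X 0 * P + X 1 * Q) = P + X 1 * divX 0 Q := by
    rw [map_add, divX_X_mul, divX_X_mul_of_ne (by decide)]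
  have h1 : (X 0 * P + X 1 * Q) - X 0 * (P + X 1 * divX 0 Q) = X 1 * (Q - X 0 * divX 0 Q) := by
    ring
  simp only [koszulMap, koszulSection, LinearMap.coprod_apply, LinearMap.prod_apply, Function.prod,
    LinearMap.comp_apply, LinearMap.sub_apply, LinearMap.id_apply, Submodule.coe_add,
    Submodule.coe_sub, coe_mulXHom, coe_divXHom]
  rw [h0, h1, divX_X_mul]
  exact ⟨rfl, rfl⟩

theorem koszulRetract_comp_koszulIncl (k : ℕ) :
    koszulRetract (R := R) k ∘ₗ koszulIncl k = LinearMap.id := by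
  ext1 r
  apply Subtype.ext
  simp [koszulRetract, koszulIncl]

theorem koszulSection_comp_koszulMap_add (k : ℕ) :
    koszulSection (k + 1) ∘ₗ koszulMap (k + 1) + koszulIncl k ∘ₗ koszulRetract k =
      (LinearMap.id : _ →ₗ[R] homogeneousSubmodule (Fin 2) R (k + 1) × _) := by
  refine LinearMap.ext fun ⟨p, q⟩ => ?_
  obtain ⟨h1, h2⟩ := koszulSection_koszulMap_apply (k + 1) p q
  ext <;> simp [koszulIncl, koszulRetract, h1, h2]

theorem koszulSection_comp_koszulMap_zero :
    koszulSection 0 ∘ₗ koszulMap 0 =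
      (LinearMap.id : _ →ₗ[R] homogeneousSubmodule (Fin 2) R 0 × _) := by
  refine LinearMap.ext fun ⟨p, q⟩ => ?_
  obtain ⟨h1, h2⟩ := koszulSection_koszulMap_apply 0 p q
  rw [divX_eq_zero_of_isHomogeneous_zero q.2] at h1 h2
  ext <;> simp [h1, h2]

end MvPolynomial

section SymPow

variable {K : Type*} [Field K]

@[simp]
theorem coe_symPowMap {n k : ℕ} (A : Matrix (Fin n) (Fin n) K)
    (p : homogeneousSubmodule (Fin n) K k) :
    (symPowMap A k p : MvPolynomial (Fin n) K) =
      aeval (fun i => ∑ j, A i j • X j) (p : MvPolynomial (Fin n) K) := rfl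

theorem symPowMap_zero {n : ℕ} (A : Matrix (Fin n) (Fin n) K) : symPowMap A 0 = LinearMap.id := by
  ext1 p
  have hp : (p : MvPolynomial (Fin n) K) ∈ (1 : Submodule K (MvPolynomial (Fin n) K)) := by
    rw [← homogeneousSubmodule_zero]
    exact p.2
  obtain ⟨c, hc⟩ := Submodule.mem_one.mp hp
  apply Subtype.ext
  rw [coe_symPowMap, LinearMap.id_apply, ← hc, AlgHom.commutes]

theorem trSymPow_zero {n : ℕ} (A : Matrix (Fin n) (Fin n) K) : trSymPow A 0 = 1 := by
  rw [trSymPow, symPowMap_zero, LinearMap.trace_id, homogeneousSubmodule_zero,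
    Submodule.one_eq_span, finrank_span_singleton one_ne_zero, Nat.cast_one]

variable (A : Matrix (Fin 2) (Fin 2) K)

/-- `A ⊗ Sym^m A` on `K² ⊗ V m = V m × V m`. -/
noncomputable def tensorSymPowMap (m : ℕ) :
    homogeneousSubmodule (Fin 2) K m × homogeneousSubmodule (Fin 2) K m →ₗ[K]
      homogeneousSubmodule (Fin 2) K m × homogeneousSubmodule (Fin 2) K m :=
  (A 0 0 • symPowMap A m).prodMap (A 1 1 • symPowMap A m)
    + LinearMap.inl K _ _ ∘ₗ (A 1 0 • symPowMap A m) ∘ₗ LinearMap.snd K _ _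
    + LinearMap.inr K _ _ ∘ₗ (A 0 1 • symPowMap A m) ∘ₗ LinearMap.fst K _ _

theorem koszulMap_comp_tensorSymPowMap (m : ℕ) :
    koszulMap m ∘ₗ tensorSymPowMap A m = symPowMap A (m + 1) ∘ₗ koszulMap m := by
  refine LinearMap.ext fun ⟨p, q⟩ => Subtype.ext ?_
  simp [koszulMap, tensorSymPowMap, Fin.sum_univ_two, smul_eq_C_mul]
  ring

theorem tensorSymPowMap_comp_koszulIncl (k : ℕ) :
    tensorSymPowMap A (k + 1) ∘ₗ koszulIncl k = koszulIncl k ∘ₗ (A.det • symPowMap A k) := by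
  refine LinearMap.ext fun r => Prod.ext (Subtype.ext ?_) (Subtype.ext ?_) <;>
  · simp [koszulIncl, tensorSymPowMap, Fin.sum_univ_two, smul_eq_C_mul, Matrix.det_fin_two]
    ring

theorem trace_tensorSymPowMap (m : ℕ) :
    LinearMap.trace K _ (tensorSymPowMap A m) = A.trace * trSymPow A m := by
  have hl : LinearMap.trace K _
      (LinearMap.inl K _ _ ∘ₗ (A 1 0 • symPowMap A m) ∘ₗ LinearMap.snd K _ _) = 0 := by
    rw [LinearMap.trace_comp_comm', LinearMap.comp_assoc, LinearMap.snd_comp_inl,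
      LinearMap.comp_zero, map_zero]
  have hr : LinearMap.trace K _
      (LinearMap.inr K _ _ ∘ₗ (A 0 1 • symPowMap A m) ∘ₗ LinearMap.fst K _ _) = 0 := by
    rw [LinearMap.trace_comp_comm', LinearMap.comp_assoc, LinearMap.fst_comp_inr,
      LinearMap.comp_zero, map_zero]
  rw [tensorSymPowMap, map_add, map_add, LinearMap.trace_prodMap', hl, hr, map_smul, map_smul,
    Matrix.trace_fin_two, trSymPow, smul_eq_mul, smul_eq_mul]
  ring

theorem trSymPow_one : trSymPow A 1 = A.trace := by
  -- `koszulMap 0` is an isomorphism: the kernel term is zero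
  have h := LinearMap.trace_eq_trace_add_trace_of_split (U := K) (koszulMap 0) (koszulSection 0) 0 0
    (tensorSymPowMap A 0) (symPowMap A 1) (koszulMap_comp_koszulSection 0)
    (by rw [LinearMap.comp_zero, add_zero, koszulSection_comp_koszulMap_zero])
    (koszulMap_comp_tensorSymPowMap A 0)
  rw [trace_tensorSymPowMap, trSymPow_zero, mul_one, LinearMap.zero_comp, map_zero,
    add_zero] at h
  exact h.symm

theorem trSymPow_add_two (k : ℕ) :
    trSymPow A (k + 2) = A.trace * trSymPow A (k + 1) - A.det * trSymPow A k := by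
  have h := LinearMap.trace_eq_trace_add_trace_of_split (koszulMap (k + 1)) (koszulSection (k + 1))
    (koszulIncl k) (koszulRetract k) (tensorSymPowMap A (k + 1)) (symPowMap A (k + 2))
    (koszulMap_comp_koszulSection _) (koszulSection_comp_koszulMap_add k)
    (koszulMap_comp_tensorSymPowMap A (k + 1))
  rw [tensorSymPowMap_comp_koszulIncl, ← LinearMap.comp_assoc, koszulRetract_comp_koszulIncl,
    LinearMap.id_comp, map_smul, trace_tensorSymPowMap, smul_eq_mul] at h
  change A.trace * trSymPow A (k + 1) = trSymPow A (k + 2) + A.det * trSymPow A k at h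
  linear_combination -h

end SymPow

theorem Matrix.pow_add_two_fin_two {R : Type*} [CommRing R] (A : Matrix (Fin 2) (Fin 2) R)
    (n : ℕ) : A ^ (n + 2) = A.trace • A ^ (n + 1) - A.det • A ^ n := by
  have hsq : A ^ 2 = A.trace • A - A.det • 1 := by
    rw [Matrix.trace_fin_two, Matrix.det_fin_two, sq]
    ext i j
    fin_cases i <;> fin_cases j <;> simp [Matrix.mul_apply] <;> ring
  rw [pow_add, hsq, mul_sub, mul_smul_comm, mul_smul_comm, mul_one, ← pow_succ]

theorem pow_succ_zero_one_eq_mul_trSymPow {K : Type*} [Field K] (A : Matrix (Fin 2) (Fin 2) K) (k : ℕ) :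
    (A ^ (k + 1)) 0 1 = A 0 1 * trSymPow A k := by
  induction k using Nat.twoStepInduction with
  | zero => rw [pow_one, trSymPow_zero, mul_one]
  | one => simp [Matrix.pow_add_two_fin_two A 0, trSymPow_one, mul_comm]
  | more k ih₀ ih₁ =>
    rw [Matrix.pow_add_two_fin_two, Matrix.sub_apply, Matrix.smul_apply, Matrix.smul_apply, ih₀,
      ih₁, trSymPow_add_two, smul_eq_mul, smul_eq_mul]
    ring

theorem entry_pow_div_eq_sym_trace
    (K : Type*) [Field K] (A : Matrix (Fin 2) (Fin 2) K) (hb : A 0 1 ≠ 0) :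
    ∀ k : ℕ, (A ^ (k + 1)) 0 1 / A 0 1 = trSymPow A k := by
  intro k
  rw [pow_succ_zero_one_eq_mul_trSymPow, mul_div_cancel_left₀ _ hb]
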